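/- Consider the family of functions u_λ : ℝ/2πℤ → ℝ, u_λ(x) = −sin x + λ^{−1/2}, for λ > 0. Then each u_λ is a classical (hence viscosity) solution of λ u_λ(x) + (u_λ'(x))² − cos²x + λ V(x,λ) = 0 on the circle, where V(x,λ) = sin x − λ^{−1/2}; but the family (u_λ) does not converge pointwise (indeed u_λ(x) → +∞) as λ → 0⁺. -/
import Mathlib

open Real Filter

/-- `u_λ(x) = −sin x + λ^{−1/2}` solves
`λu + (u')² − cos²x + λV(x,λ) = 0` with `V(x,λ) = sin x − λ^{−1/2}`, is `2π`-periodic,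
but `u_λ(x) → +∞` as `λ → 0⁺`, so the family does not converge pointwise. -/
theorem stmt_10 :
    (∀ lam : ℝ, 0 < lam →
      (Function.Periodic (fun x : ℝ => -Real.sin x + lam ^ (-(1:ℝ)/2)) (2 * π)) ∧
      ∀ x : ℝ,
        lam * (-Real.sin x + lam ^ (-(1:ℝ)/2))
          + (deriv (fun y : ℝ => -Real.sin y + lam ^ (-(1:ℝ)/2)) x) ^ 2
          - (Real.cos x) ^ 2
          + lam * (Real.sin x - lam ^ (-(1:ℝ)/2)) = 0) ∧
    (∀ x : ℝ, Tendsto (fun lam : ℝ => -Real.sin x + lam ^ (-(1:ℝ)/2))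
      (nhdsWithin 0 (Set.Ioi 0)) atTop) := by
  constructor
  · intro lam hlam
    constructor
    · intro x
      simp [Real.sin_add_two_pi]
    · intro x
      have hderiv : deriv (fun y : ℝ => -Real.sin y + lam ^ (-(1:ℝ)/2)) x = -Real.cos x := by
        have h1 : HasDerivAt (fun y : ℝ => -Real.sin y + lam ^ (-(1:ℝ)/2)) (-Real.cos x) x := by
          simpa using ((Real.hasDerivAt_sin x).neg.add_const (lam ^ (-(1:ℝ)/2)))
        exact h1.deriv
      rw [hderiv]
      ring
  · intro x
    have h1 : Tendsto (fun lam : ℝ => lam ^ (-(1:ℝ)/2)) (nhdsWithin 0 (Set.Ioi 0)) atTop := by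
      have h2 : Tendsto (fun lam : ℝ => lam⁻¹) (nhdsWithin 0 (Set.Ioi 0)) atTop :=
        tendsto_inv_nhdsGT_zero
      have h3 : Tendsto (fun z : ℝ => z ^ ((1:ℝ)/2)) atTop atTop :=
        tendsto_rpow_atTop (by norm_num)
      have := h3.comp h2
      apply this.congr'
      filter_upwards [self_mem_nhdsWithin] with lam hlam
      have : (0:ℝ) ≤ lam := le_of_lt hlam
      rw [Function.comp_apply, ← Real.rpow_neg_one lam, ← Real.rpow_mul this]
      · norm_num
    exact tendsto_atTop_add_const_left _ _ h1
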